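/- arXiv:1901.05996 — 6 statements merged into one kernel-verified Lean document; each statement's English description precedes it below -/
import Mathlib

section
/- For every real ρ > 0, the function ‖t‖_ρ := ((1 + ρ)/ρ)·|log(1 + ρ·t)| is a group norm on the Popa group G_ρ; that is, for all s, t ∈ G_ρ: (i) ‖t‖_ρ = 0 if and only if t = 0; (ii) ‖s ∘_ρ t‖_ρ ≤ ‖s‖_ρ + ‖t‖_ρ; and (iii) ‖−t/(1 + ρ·t)‖_ρ = ‖t‖_ρ, where −t/(1 + ρ·t) is the inverse of t in G_ρ. -/
/-!
`t ↦ log (1 + ρ t)` is an isomorphism from the Popa group `G_ρ` onto `(ℝ, +)`, and `‖·‖_ρ` is a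
positive multiple of the absolute value pulled back along it; the absolute value is a group norm
on `(ℝ, +)`.
-/

namespace PopaGroup

open Real

variable {ρ s t : ℝ}

theorem one_add_mul_mul (ρ s t : ℝ) :
    1 + ρ * (s + t + ρ * s * t) = (1 + ρ * s) * (1 + ρ * t) := by
  ring

theorem one_add_mul_inv (ht : 1 + ρ * t ≠ 0) :
    1 + ρ * (-t / (1 + ρ * t)) = (1 + ρ * t)⁻¹ := by
  field_simp
  ring

theorem log_one_add_mul_mul (hs : 0 < 1 + ρ * s) (ht : 0 < 1 + ρ * t) :
    log (1 + ρ * (s + t + ρ * s * t)) = log (1 + ρ * s) + log (1 + ρ * t) := by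
  rw [one_add_mul_mul, log_mul hs.ne' ht.ne']

theorem log_one_add_mul_inv (ht : 1 + ρ * t ≠ 0) :
    log (1 + ρ * (-t / (1 + ρ * t))) = -log (1 + ρ * t) := by
  rw [one_add_mul_inv ht, log_inv]

theorem log_one_add_mul_eq_zero_iff (hρ : ρ ≠ 0) (ht : 0 < 1 + ρ * t) :
    log (1 + ρ * t) = 0 ↔ t = 0 := by
  rw [log_eq_zero, or_iff_right ht.ne', or_iff_left (neg_one_lt_zero.trans ht).ne', add_eq_left,
    mul_eq_zero, or_iff_right hρ]

end PopaGroup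

open PopaGroup in
/-- For `ρ > 0`, `‖t‖_ρ := ((1+ρ)/ρ)·|log(1+ρ·t)|` is a group norm
on the Popa group `G_ρ`: it vanishes exactly at the identity `0`, is subadditive
with respect to `∘_ρ`, and is invariant under the group inverse `-t/(1+ρ·t)`. -/
theorem popa_group_norm (ρ : ℝ) (hρ : 0 < ρ)
    (N : ℝ → ℝ) (hN : ∀ t, N t = ((1 + ρ) / ρ) * |Real.log (1 + ρ * t)|) :
    ∀ s t : ℝ, 0 < 1 + ρ * s → 0 < 1 + ρ * t →
      ((N t = 0 ↔ t = 0) ∧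
       N (s + t + ρ * s * t) ≤ N s + N t ∧
       N (-t / (1 + ρ * t)) = N t) := by
  intro s t hs ht
  have hc : 0 < (1 + ρ) / ρ := by positivity
  simp only [hN]
  refine ⟨?_, ?_, ?_⟩
  · rw [mul_eq_zero, or_iff_right hc.ne', abs_eq_zero, log_one_add_mul_eq_zero_iff hρ.ne' ht]
  · rw [log_one_add_mul_mul hs ht, ← mul_add]
    exact mul_le_mul_of_nonneg_left (abs_add_le _ _) hc.le
  · rw [log_one_add_mul_inv ht.ne', abs_neg]
end

section
/- Let φ : (0, ∞) → (0, ∞) satisfy φ(x) = O(x) as x → ∞, and suppose that for each t ≥ 0 the ratio η_x(t) := φ(x + t·φ(x))/φ(x) converges as x → ∞ to a limit η(t), the convergence being locally uniform in t on [0, ∞). Then η satisfies the Gołąb–Schinzel functional equation: η(s + η(s)·t) = η(s)·η(t) for all s, t ≥ 0. -/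
/-!
Write `E x t = popaRatio φ x t = φ (x + t φ x) / φ x` and `u = s + η s t`. The exact
cocycle identity `E x (p + ρ E x p) = E x p · E (x + p φ x) ρ` with `b = E x s → η s` gives
`E x (s + t b) = b · E (x + s φ x) t → η s · η t`. Since `s + t b → u`, the equation follows
once `E z p → η u` whenever `z → ∞` and `p → u` from the right, which by the local uniform
convergence means that `η` is right-continuous on `[0, ∞)`. This settles the `x` with
`b ≥ η s`; for the `x` with `b < η s` one writes `u = s + (η s t / b) b` instead, where
`η s t / b → t` from the right.

Right-continuity comes from `1 - r ≤ η r ≤ 1 + C r`, which makes `E z ρ` uniformly close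
to `1` for small `ρ` and large `z`. Along an orbit of `w ↦ w + r φ w` the upper bound holds
because `φ = O(x)` caps the growth of `φ`, and the lower bound because a geometric decay
of `φ` would force `φ` to vanish at the limit of the orbit. At a zero `w` of `η`, the
points `w + r E x w` tend to `w` from the right, and `E x` is small there, so `η` cannot
stay bounded away from `0` to the right of `w`.
-/

open Filter Topology Set

noncomputable def popaRatio (φ : ℝ → ℝ) (x t : ℝ) : ℝ := φ (x + t * φ x) / φ x

def HasPopaLimit (φ η : ℝ → ℝ) : Prop :=
  ∀ K : Set ℝ, K ⊆ Ici 0 → IsCompact K → TendstoUniformlyOn (popaRatio φ) η atTop K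

section

variable {φ η : ℝ → ℝ}

lemma popaRatio_add_mul {x p : ℝ} (hx : φ x ≠ 0) (hp : φ (x + p * φ x) ≠ 0) (ρ : ℝ) :
    popaRatio φ x (p + ρ * popaRatio φ x p) =
      popaRatio φ x p * popaRatio φ (x + p * φ x) ρ := by
  unfold popaRatio
  rw [show x + (p + ρ * (φ (x + p * φ x) / φ x)) * φ x
      = x + p * φ x + ρ * φ (x + p * φ x) by field_simp; ring]
  field_simp

lemma add_mul_apply_pos (hφ : ∀ x > 0, 0 < φ x) {x p : ℝ} (hx : 0 < x) (hp : 0 ≤ p) :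
    0 < x + p * φ x :=
  add_pos_of_pos_of_nonneg hx (mul_nonneg hp (hφ x hx).le)

lemma popaRatio_pos (hφ : ∀ x > 0, 0 < φ x) {x t : ℝ} (hx : 0 < x) (ht : 0 ≤ t) :
    0 < popaRatio φ x t :=
  div_pos (hφ _ (add_mul_apply_pos hφ hx ht)) (hφ x hx)

lemma tendsto_add_mul_apply_atTop (hφ : ∀ x > 0, 0 < φ x) {α : Type*} {l : Filter α}
    {z p : α → ℝ} (hz : Tendsto z l atTop) (hp : ∀ᶠ i in l, 0 ≤ p i) :
    Tendsto (fun i => z i + p i * φ (z i)) l atTop :=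
  tendsto_atTop_mono' l (by
    filter_upwards [hp, hz.eventually_gt_atTop 0] with i hpi hzi
    exact le_add_of_nonneg_right (mul_nonneg hpi (hφ _ hzi).le)) hz

noncomputable def popaOrbit (φ : ℝ → ℝ) (r X : ℝ) (k : ℕ) : ℝ :=
  (fun w => w + r * φ w)^[k] X

section Orbit

variable {r X : ℝ}

lemma popaOrbit_succ (k : ℕ) :
    popaOrbit φ r X (k + 1) = popaOrbit φ r X k + r * φ (popaOrbit φ r X k) :=
  Function.iterate_succ_apply' _ _ _

lemma le_popaOrbit (hφ : ∀ x > 0, 0 < φ x) (hX : 0 < X) (hr : 0 ≤ r) (k : ℕ) :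
    X ≤ popaOrbit φ r X k := by
  induction k with
  | zero => exact le_rfl
  | succ k ih =>
    rw [popaOrbit_succ]
    exact ih.trans (le_add_of_nonneg_right (mul_nonneg hr (hφ _ (hX.trans_le ih)).le))

lemma monotone_popaOrbit (hφ : ∀ x > 0, 0 < φ x) (hX : 0 < X) (hr : 0 ≤ r) :
    Monotone (popaOrbit φ r X) :=
  monotone_nat_of_le_succ fun k => by
    rw [popaOrbit_succ]
    exact le_add_of_nonneg_right
      (mul_nonneg hr (hφ _ (hX.trans_le (le_popaOrbit hφ hX hr k))).le)

lemma pow_mul_le_apply_popaOrbit (hφ : ∀ x > 0, 0 < φ x) (hX : 0 < X) (hr : 0 ≤ r) {c : ℝ}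
    (hc : 0 ≤ c) (hstep : ∀ w ≥ X, c * φ w ≤ φ (w + r * φ w)) (k : ℕ) :
    c ^ k * φ X ≤ φ (popaOrbit φ r X k) := by
  induction k with
  | zero => simp [popaOrbit]
  | succ k ih =>
    rw [popaOrbit_succ, pow_succ', mul_assoc]
    exact (mul_le_mul_of_nonneg_left ih hc).trans (hstep _ (le_popaOrbit hφ hX hr k))

lemma apply_popaOrbit_le_pow_mul (hφ : ∀ x > 0, 0 < φ x) (hX : 0 < X) (hr : 0 ≤ r) {c : ℝ}
    (hc : 0 ≤ c) (hstep : ∀ w ≥ X, φ (w + r * φ w) ≤ c * φ w) (k : ℕ) :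
    φ (popaOrbit φ r X k) ≤ c ^ k * φ X := by
  induction k with
  | zero => simp [popaOrbit]
  | succ k ih =>
    rw [popaOrbit_succ, pow_succ', mul_assoc]
    exact (hstep _ (le_popaOrbit hφ hX hr k)).trans (mul_le_mul_of_nonneg_left ih hc)

lemma popaOrbit_le_mul_pow (hφ : ∀ x > 0, 0 < φ x) (hX : 0 < X) (hr : 0 ≤ r) {C : ℝ}
    (hC : ∀ w ≥ X, φ w ≤ C * w) (k : ℕ) : popaOrbit φ r X k ≤ X * (1 + r * C) ^ k := by
  have hCpos : 0 < C := pos_of_mul_pos_left ((hφ X hX).trans_le (hC X le_rfl)) hX.le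
  induction k with
  | zero => simp [popaOrbit]
  | succ k ih =>
    have h := mul_le_mul_of_nonneg_left (hC _ (le_popaOrbit hφ hX hr k)) hr
    rw [popaOrbit_succ, pow_succ, ← mul_assoc]
    nlinarith [mul_le_mul_of_nonneg_right ih (by positivity : (0 : ℝ) ≤ 1 + r * C)]

/-- Since `r + c ≤ 1`, the quantity `w + φ w` does not increase along the orbit. -/
lemma exists_popaOrbit_le_le_add (hφ : ∀ x > 0, 0 < φ x) (hX : 0 < X) (hr : 0 ≤ r) {c : ℝ}
    (hrc : r + c ≤ 1) (hstep : ∀ w ≥ X, φ (w + r * φ w) ≤ c * φ w) :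
    ∃ Z, ∀ k, popaOrbit φ r X k ≤ Z ∧
      Z ≤ popaOrbit φ r X k + φ (popaOrbit φ r X k) := by
  set z := popaOrbit φ r X
  have hz : ∀ k, 0 < φ (z k) := fun k => hφ _ (hX.trans_le (le_popaOrbit hφ hX hr k))
  have hpot : Antitone fun k => z k + φ (z k) := antitone_nat_of_succ_le fun k => by
    have h := hstep _ (le_popaOrbit hφ hX hr k)
    rw [← popaOrbit_succ] at h
    linarith [popaOrbit_succ (φ := φ) (r := r) (X := X) k,
      mul_le_mul_of_nonneg_right hrc (hz k).le]
  have hbdd : BddAbove (range z) := by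
    refine ⟨z 0 + φ (z 0), ?_⟩
    rintro _ ⟨j, rfl⟩
    exact (le_add_of_nonneg_right (hz j).le).trans (hpot (Nat.zero_le j))
  refine ⟨⨆ j, z j, fun k => ⟨le_ciSup hbdd k, ciSup_le fun j => ?_⟩⟩
  exact (monotone_popaOrbit hφ hX hr (le_max_left j k)).trans
    ((le_add_of_nonneg_right (hz _).le).trans (hpot (le_max_right j k)))

end Orbit

/-- Along the orbit of `w ↦ w + r φ w`, `φ` grows at least by the factor `c` per step, while the
orbit, and with it the bound `C w` on `φ`, grows at most by the factor `1 + r C`. -/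
lemma le_one_add_mul_of_eventually_le_popaRatio (hφ : ∀ x > 0, 0 < φ x) {C r c : ℝ}
    (hC : ∀ᶠ x in atTop, φ x ≤ C * x) (hr : 0 ≤ r)
    (hc : ∀ᶠ x in atTop, c ≤ popaRatio φ x r) : c ≤ 1 + r * C := by
  obtain ⟨X, hX⟩ := eventually_atTop.1 ((hC.and hc).and (eventually_gt_atTop 0))
  have hX0 : 0 < X := (hX X le_rfl).2
  have hφX := hφ X hX0
  have hCpos : 0 < C := pos_of_mul_pos_left (hφX.trans_le (hX X le_rfl).1.1) hX0.le
  by_contra! hlt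
  have hstep : ∀ w ≥ X, c * φ w ≤ φ (w + r * φ w) := fun w hw =>
    (le_div_iff₀ (hφ w (hX0.trans_le hw))).1 (hX w hw).1.2
  have hρ : 0 < 1 + r * C := by positivity
  obtain ⟨n, hn⟩ := pow_unbounded_of_one_lt (C * X / φ X) ((one_lt_div hρ).2 hlt)
  rw [div_pow, div_lt_div_iff₀ hφX (by positivity)] at hn
  have h1 := pow_mul_le_apply_popaOrbit hφ hX0 hr (by linarith) hstep n
  have h2 := (hX _ (le_popaOrbit hφ hX0 hr n)).1.1
  have h3 := mul_le_mul_of_nonneg_left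
    (popaOrbit_le_mul_pow hφ hX0 hr (fun w hw => (hX w hw).1.1) n) hCpos.le
  linarith

/-- A decay `φ (w + r φ w) ≤ c φ w` with `r + c ≤ 1` makes the orbit of `w ↦ w + r φ w`
converge to a point `Z` within one step `φ w` of each of its points `w`; then
`φ Z ≤ M φ w`, while `φ w → 0` along the orbit. -/
lemma one_lt_add_of_eventually_popaRatio_le (hφ : ∀ x > 0, 0 < φ x) {M r c : ℝ}
    (hM : ∀ᶠ x in atTop, ∀ ρ ∈ Icc (0 : ℝ) 1, popaRatio φ x ρ ≤ M) (hr : 0 < r)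
    (hc : ∀ᶠ x in atTop, popaRatio φ x r ≤ c) : 1 < r + c := by
  by_contra! hle
  obtain ⟨X, hX⟩ := eventually_atTop.1 ((hM.and hc).and (eventually_gt_atTop 0))
  have hX0 : 0 < X := (hX X le_rfl).2
  set z := popaOrbit φ r X
  have hz : ∀ k, 0 < φ (z k) := fun k => hφ _ (hX0.trans_le (le_popaOrbit hφ hX0 hr.le k))
  have hstep : ∀ w ≥ X, φ (w + r * φ w) ≤ c * φ w := fun w hw =>
    (div_le_iff₀ (hφ w (hX0.trans_le hw))).1 (hX w hw).1.2
  have hc0 : 0 ≤ c := (pos_of_mul_pos_left ((hφ _ (add_mul_apply_pos hφ hX0 hr.le)).trans_le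
    (hstep X le_rfl)) (hφ X hX0).le).le
  obtain ⟨Z, hZ⟩ := exists_popaOrbit_le_le_add hφ hX0 hr.le hle hstep
  have hφZ : ∀ k, φ Z ≤ M * (c ^ k * φ X) := by
    intro k
    set ρ := (Z - z k) / φ (z k)
    have hρ : ρ ∈ Icc (0 : ℝ) 1 :=
      ⟨div_nonneg (sub_nonneg.2 (hZ k).1) (hz k).le,
        (div_le_one (hz k)).2 (by linarith [(hZ k).2])⟩
    have hXz := le_popaOrbit hφ hX0 hr.le k
    have h := (hX (z k) hXz).1.1 ρ hρ
    have hM0 : 0 ≤ M := (popaRatio_pos hφ (hX0.trans_le hXz) hρ.1).le.trans h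
    rw [popaRatio, show z k + ρ * φ (z k) = Z by rw [div_mul_cancel₀ _ (hz k).ne']; ring,
      div_le_iff₀ (hz k)] at h
    exact h.trans (mul_le_mul_of_nonneg_left
      (apply_popaOrbit_le_pow_mul hφ hX0 hr.le hc0 hstep k) hM0)
  have hlim : Tendsto (fun k => M * (c ^ k * φ X)) atTop (𝓝 0) := by
    simpa using
      ((tendsto_pow_atTop_nhds_zero_of_lt_one hc0 (by linarith)).mul_const (φ X)).const_mul M
  linarith [ge_of_tendsto' hlim hφZ,
    hφ Z (hX0.trans_le ((le_popaOrbit hφ hX0 hr.le 0).trans (hZ 0).1))]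

namespace HasPopaLimit

lemma tendsto (hη : HasPopaLimit φ η) {t : ℝ} (ht : 0 ≤ t) :
    Tendsto (fun x => popaRatio φ x t) atTop (𝓝 (η t)) :=
  (hη {t} (singleton_subset_iff.2 ht) isCompact_singleton).tendsto_at rfl

lemma tendsto_popaRatio_sub (hη : HasPopaLimit φ η) {α : Type*} {l : Filter α}
    {z p : α → ℝ} {w : ℝ} (hw : 0 ≤ w) (hz : Tendsto z l atTop) (hp : Tendsto p l (𝓝[≥] w)) :
    Tendsto (fun i => popaRatio φ (z i) (p i) - η (p i)) l (𝓝 0) := by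
  refine Metric.tendsto_nhds.2 fun ε hε => ?_
  have hunif := Metric.tendstoUniformlyOn_iff.1
    (hη (Icc 0 (w + 1)) (fun _ h => h.1) isCompact_Icc) ε hε
  obtain ⟨hp_nhds, hp_ge⟩ := tendsto_nhdsWithin_iff.1 hp
  filter_upwards [hz.eventually hunif, hp_ge,
    hp_nhds.eventually (eventually_le_nhds (lt_add_one w))] with i hi hpi hpi'
  rw [dist_zero_right, Real.norm_eq_abs, abs_sub_comm]
  exact hi _ ⟨hw.trans hpi, hpi'⟩

lemma eta_zero (hφ : ∀ x > 0, 0 < φ x) (hη : HasPopaLimit φ η) : η 0 = 1 := by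
  refine tendsto_nhds_unique (hη.tendsto le_rfl) (tendsto_const_nhds.congr' ?_)
  filter_upwards [eventually_gt_atTop 0] with x hx
  simp [popaRatio, (hφ x hx).ne']

lemma eta_nonneg (hφ : ∀ x > 0, 0 < φ x) (hη : HasPopaLimit φ η) {t : ℝ} (ht : 0 ≤ t) :
    0 ≤ η t :=
  ge_of_tendsto (hη.tendsto ht) <| by
    filter_upwards [eventually_gt_atTop 0] with x hx using (popaRatio_pos hφ hx ht).le

lemma eta_le (hφ : ∀ x > 0, 0 < φ x) {C : ℝ} (hC : ∀ᶠ x in atTop, φ x ≤ C * x)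
    (hη : HasPopaLimit φ η) {r : ℝ} (hr : 0 ≤ r) : η r ≤ 1 + r * C :=
  le_of_forall_lt_imp_le_of_dense fun _ hc =>
    le_one_add_mul_of_eventually_le_popaRatio hφ hC hr
      ((hη.tendsto hr).eventually (eventually_ge_nhds hc))

lemma eventually_popaRatio_le (hφ : ∀ x > 0, 0 < φ x) {C : ℝ}
    (hC : ∀ᶠ x in atTop, φ x ≤ C * x) (hη : HasPopaLimit φ η) :
    ∃ M, ∀ᶠ x in atTop, ∀ ρ ∈ Icc (0 : ℝ) 1, popaRatio φ x ρ ≤ M := by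
  refine ⟨2 + |C|, ?_⟩
  filter_upwards [Metric.tendstoUniformlyOn_iff.1
    (hη _ (fun _ h => h.1) isCompact_Icc) 1 one_pos] with x hx ρ hρ
  have h1 := (abs_lt.1 (Real.dist_eq _ _ ▸ hx ρ hρ)).1
  have h2 := hη.eta_le hφ hC hρ.1
  nlinarith [le_abs_self C, abs_nonneg C, hρ.2, hρ.1]

lemma one_sub_le_eta (hφ : ∀ x > 0, 0 < φ x) {C : ℝ} (hC : ∀ᶠ x in atTop, φ x ≤ C * x)
    (hη : HasPopaLimit φ η) {r : ℝ} (hr : 0 ≤ r) : 1 - r ≤ η r := by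
  rcases hr.eq_or_lt with rfl | hr
  · rw [hη.eta_zero hφ, sub_zero]
  obtain ⟨M, hM⟩ := hη.eventually_popaRatio_le hφ hC
  refine le_of_forall_gt_imp_ge_of_dense fun c hc => ?_
  have := one_lt_add_of_eventually_popaRatio_le hφ hM hr
    ((hη.tendsto hr.le).eventually (eventually_le_nhds hc))
  linarith

lemma eventually_abs_popaRatio_sub_one_le (hφ : ∀ x > 0, 0 < φ x) {C : ℝ}
    (hC : ∀ᶠ x in atTop, φ x ≤ C * x) (hη : HasPopaLimit φ η) {δ : ℝ} (hδ : 0 < δ) :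
    ∃ r > 0, ∀ᶠ x in atTop, ∀ ρ ∈ Icc 0 r, |popaRatio φ x ρ - 1| ≤ δ := by
  set r := δ / (2 * (1 + |C|))
  have hr : 0 < r := by positivity
  refine ⟨r, hr, ?_⟩
  filter_upwards [Metric.tendstoUniformlyOn_iff.1
    (hη _ (fun _ h => h.1) isCompact_Icc) (δ / 2) (half_pos hδ)] with x hx ρ hρ
  obtain ⟨hlo, hhi⟩ := abs_lt.1 (Real.dist_eq _ _ ▸ hx ρ hρ)
  have h2 := hη.eta_le hφ hC hρ.1
  have h3 := hη.one_sub_le_eta hφ hC hρ.1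
  have h4 : ρ * (1 + |C|) ≤ δ / 2 := by
    calc ρ * (1 + |C|) ≤ r * (1 + |C|) := by gcongr; exact hρ.2
      _ = δ / 2 := by simp only [r]; field_simp
  rw [abs_le]
  have h5 := mul_le_mul_of_nonneg_left (le_abs_self C) hρ.1
  have h6 := mul_nonneg hρ.1 (abs_nonneg C)
  constructor <;> linarith [hρ.1]

lemma abs_eta_add_sub_le (hφ : ∀ x > 0, 0 < φ x) {C : ℝ}
    (hC : ∀ᶠ x in atTop, φ x ≤ C * x) (hη : HasPopaLimit φ η) {δ : ℝ} (hδ : 0 < δ) :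
    ∃ r > 0, ∀ p ≥ 0, ∀ h ≥ 0, h < r * η p → |η (p + h) - η p| ≤ δ * η p := by
  obtain ⟨r, hr, hnear⟩ := hη.eventually_abs_popaRatio_sub_one_le hφ hC hδ
  refine ⟨r, hr, fun p hp h hh hlt => ?_⟩
  have hlim := hη.tendsto hp
  refine le_of_tendsto_of_tendsto ((hη.tendsto (add_nonneg hp hh)).sub hlim).abs
    (hlim.const_mul δ) ?_
  filter_upwards [eventually_gt_atTop 0,
    (tendsto_add_mul_apply_atTop hφ tendsto_id (.of_forall fun _ => hp)).eventually hnear,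
    hlim.eventually (lt_mem_nhds ((div_lt_iff₀' hr).2 hlt))] with x hx hnear_x hbig
  have hE := popaRatio_pos hφ hx hp
  -- the step `h` from `p` is the relative step `h / popaRatio φ x p` from `x + p φ x`
  have hρ : h / popaRatio φ x p ∈ Icc 0 r :=
    ⟨div_nonneg hh hE.le, (div_le_iff₀ hE).2 (by rw [div_lt_iff₀' hr] at hbig; linarith)⟩
  have hsplit := popaRatio_add_mul (hφ x hx).ne' (hφ _ (add_mul_apply_pos hφ hx hp)).ne'
    (h / popaRatio φ x p)
  rw [div_mul_cancel₀ _ hE.ne'] at hsplit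
  rw [hsplit, ← mul_sub_one, abs_mul, abs_of_pos hE, mul_comm δ]
  exact mul_le_mul_of_nonneg_left (hnear_x _ hρ) hE.le

/-- With `e = popaRatio φ x w → 0`, the points `w + r e` tend to `w` from the right while
`popaRatio φ x (w + r e) = e · popaRatio φ (x + w φ x) r ≤ 3 e / 2` also tends to `0`. -/
lemma frequently_eta_lt_of_eta_eq_zero (hφ : ∀ x > 0, 0 < φ x) {C : ℝ}
    (hC : ∀ᶠ x in atTop, φ x ≤ C * x) (hη : HasPopaLimit φ η) {w : ℝ} (hw : 0 ≤ w)
    (hw0 : η w = 0) {c : ℝ} (hc : 0 < c) : ∃ᶠ ρ in 𝓝[>] w, η ρ < c := by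
  obtain ⟨r, hr, hnear⟩ := hη.eventually_abs_popaRatio_sub_one_le hφ hC one_half_pos
  have he : Tendsto (fun x => popaRatio φ x w) atTop (𝓝 0) := hw0 ▸ hη.tendsto hw
  have hρ : Tendsto (fun x => w + r * popaRatio φ x w) atTop (𝓝[>] w) := by
    refine tendsto_nhdsWithin_iff.2 ⟨by simpa using (he.const_mul r).const_add w, ?_⟩
    filter_upwards [eventually_gt_atTop 0] with x hx
    exact lt_add_of_pos_right w (mul_pos hr (popaRatio_pos hφ hx hw))
  have hsub := hη.tendsto_popaRatio_sub hw tendsto_id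
    (hρ.mono_right (nhdsWithin_mono _ Ioi_subset_Ici_self))
  refine hρ.frequently (Eventually.frequently ?_)
  filter_upwards [eventually_gt_atTop 0,
    (tendsto_add_mul_apply_atTop hφ tendsto_id (.of_forall fun _ => hw)).eventually hnear,
    he.eventually (eventually_lt_nhds (by positivity : (0 : ℝ) < c / 3)),
    hsub.eventually (eventually_gt_nhds (neg_lt_zero.2 (half_pos hc)))]
    with x hx hnear_x he_x hsub_x
  have hsplit := popaRatio_add_mul (hφ x hx).ne' (hφ _ (add_mul_apply_pos hφ hx hw)).ne' r
  have hF := (abs_le.1 (hnear_x r ⟨hr.le, le_rfl⟩)).2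
  have he0 := popaRatio_pos hφ hx hw
  rw [mul_comm r] at hsplit
  simp only [id, mul_comm r] at hsub_x hF ⊢
  rw [hsplit] at hsub_x
  nlinarith [mul_le_mul_of_nonneg_left hF he0.le]

lemma continuousWithinAt_Ici_of_pos (hφ : ∀ x > 0, 0 < φ x) {C : ℝ}
    (hC : ∀ᶠ x in atTop, φ x ≤ C * x) (hη : HasPopaLimit φ η) {w : ℝ} (hw : 0 ≤ w)
    (hpos : 0 < η w) : ContinuousWithinAt η (Ici w) w := by
  refine Metric.tendsto_nhdsWithin_nhds.2 fun ε hε => ?_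
  obtain ⟨r, hr, hstep⟩ := hη.abs_eta_add_sub_le hφ hC (div_pos (half_pos hε) hpos)
  refine ⟨r * η w, by positivity, fun p (hp : w ≤ p) hpw => ?_⟩
  rw [Real.dist_eq, abs_of_nonneg (sub_nonneg.2 hp)] at hpw
  have h := hstep w hw (p - w) (sub_nonneg.2 hp) hpw
  rw [add_sub_cancel, div_mul_cancel₀ _ hpos.ne'] at h
  rw [Real.dist_eq]
  linarith

/-- If `η ≥ c` at points arbitrarily close to the right of a zero `w`, then by
`abs_eta_add_sub_le` `η ≥ c / 2` on a whole interval `(w, w + r c / 2)`, which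
`frequently_eta_lt_of_eta_eq_zero` rules out. -/
lemma continuousWithinAt_Ici_of_eq_zero (hφ : ∀ x > 0, 0 < φ x) {C : ℝ}
    (hC : ∀ᶠ x in atTop, φ x ≤ C * x) (hη : HasPopaLimit φ η) {w : ℝ} (hw : 0 ≤ w)
    (hw0 : η w = 0) : ContinuousWithinAt η (Ici w) w := by
  unfold ContinuousWithinAt
  rw [hw0]
  refine tendsto_order.2 ⟨fun a ha => ?_, fun c hc => ?_⟩
  · filter_upwards [self_mem_nhdsWithin] with p (hp : w ≤ p)
    exact ha.trans_le (hη.eta_nonneg hφ (hw.trans hp))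
  by_contra hfreq
  rw [not_eventually] at hfreq
  obtain ⟨r, hr, hstep⟩ := hη.abs_eta_add_sub_le hφ hC one_half_pos
  have hwindow : ∀ ρ ∈ Ioo w (w + r * c / 2), c / 2 ≤ η ρ := by
    intro ρ hρ
    obtain ⟨p, hpc, hp⟩ := (hfreq.and_eventually (Ico_mem_nhdsGE hρ.1)).exists
    rw [not_lt] at hpc
    have hrc := mul_le_mul_of_nonneg_left hpc hr.le
    have h := hstep p (hw.trans hp.1) (ρ - p) (by linarith [hp.2]) (by linarith [hp.1, hρ.2])
    rw [add_sub_cancel] at h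
    linarith [(abs_le.1 h).1]
  obtain ⟨ρ, hlt, hρ⟩ :=
    ((hη.frequently_eta_lt_of_eta_eq_zero hφ hC hw hw0 (half_pos hc)).and_eventually
      (Ioo_mem_nhdsGT (lt_add_of_pos_right w (by positivity : 0 < r * c / 2)))).exists
  exact (hwindow ρ hρ).not_gt hlt

lemma continuousWithinAt_Ici (hφ : ∀ x > 0, 0 < φ x) {C : ℝ}
    (hC : ∀ᶠ x in atTop, φ x ≤ C * x) (hη : HasPopaLimit φ η) {w : ℝ} (hw : 0 ≤ w) :
    ContinuousWithinAt η (Ici w) w := by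
  rcases (hη.eta_nonneg hφ hw).eq_or_lt with h | h
  · exact hη.continuousWithinAt_Ici_of_eq_zero hφ hC hw h.symm
  · exact hη.continuousWithinAt_Ici_of_pos hφ hC hw h

lemma tendsto_popaRatio_comp (hφ : ∀ x > 0, 0 < φ x) {C : ℝ}
    (hC : ∀ᶠ x in atTop, φ x ≤ C * x) (hη : HasPopaLimit φ η) {α : Type*} {l : Filter α}
    {z p : α → ℝ} {w : ℝ} (hw : 0 ≤ w) (hz : Tendsto z l atTop)
    (hp : Tendsto p l (𝓝[≥] w)) : Tendsto (fun i => popaRatio φ (z i) (p i)) l (𝓝 (η w)) := by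
  simpa using (hη.tendsto_popaRatio_sub hw hz hp).add
    ((hη.continuousWithinAt_Ici hφ hC hw).tendsto.comp hp)

end HasPopaLimit

lemma golab_schinzel_of_frequently_le (hφ : ∀ x > 0, 0 < φ x) {C : ℝ}
    (hC : ∀ᶠ x in atTop, φ x ≤ C * x) (hη : HasPopaLimit φ η) {s t : ℝ} (hs : 0 ≤ s)
    (ht : 0 ≤ t) (hfreq : ∃ᶠ x in atTop, η s ≤ popaRatio φ x s) :
    η (s + η s * t) = η s * η t := by
  set l := atTop ⊓ 𝓟 {x | η s ≤ popaRatio φ x s}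
  have : l.NeBot := frequently_iff_neBot.1 hfreq
  have hx : Tendsto (fun x => x) l atTop := tendsto_id.mono_left inf_le_left
  have hb : Tendsto (fun x => popaRatio φ x s) l (𝓝 (η s)) :=
    (hη.tendsto hs).mono_left inf_le_left
  have hv : Tendsto (fun x => s + t * popaRatio φ x s) l (𝓝[≥] (s + η s * t)) := by
    refine tendsto_nhdsWithin_iff.2 ⟨by simpa [mul_comm] using (hb.const_mul t).const_add s, ?_⟩
    filter_upwards [mem_inf_of_right (mem_principal_self _)] with x (hx : η s ≤ _)
    simpa [mul_comm t] using mul_le_mul_of_nonneg_right hx ht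
  have hsplit : ∀ᶠ x in l, popaRatio φ x (s + t * popaRatio φ x s)
      = popaRatio φ x s * popaRatio φ (x + s * φ x) t := by
    filter_upwards [hx.eventually_gt_atTop 0] with x hx0
    exact popaRatio_add_mul (hφ x hx0).ne' (hφ _ (add_mul_apply_pos hφ hx0 hs)).ne' t
  have hu : 0 ≤ s + η s * t := add_nonneg hs (mul_nonneg (hη.eta_nonneg hφ hs) ht)
  exact tendsto_nhds_unique ((hη.tendsto_popaRatio_comp hφ hC hu hx hv).congr' hsplit)
    (hb.mul ((hη.tendsto ht).comp (tendsto_add_mul_apply_atTop hφ hx (.of_forall fun _ => hs))))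

lemma golab_schinzel_of_frequently_lt (hφ : ∀ x > 0, 0 < φ x) {C : ℝ}
    (hC : ∀ᶠ x in atTop, φ x ≤ C * x) (hη : HasPopaLimit φ η) {s t : ℝ} (hs : 0 ≤ s)
    (ht : 0 ≤ t) (hfreq : ∃ᶠ x in atTop, popaRatio φ x s < η s) :
    η (s + η s * t) = η s * η t := by
  set l := atTop ⊓ 𝓟 {x | popaRatio φ x s < η s}
  have : l.NeBot := frequently_iff_neBot.1 hfreq
  have hx : Tendsto (fun x => x) l atTop := tendsto_id.mono_left inf_le_left
  have hb : Tendsto (fun x => popaRatio φ x s) l (𝓝 (η s)) :=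
    (hη.tendsto hs).mono_left inf_le_left
  have hlt : ∀ᶠ x in l, popaRatio φ x s < η s := mem_inf_of_right (mem_principal_self _)
  have hpos : ∀ᶠ x in l, 0 < popaRatio φ x s := by
    filter_upwards [hx.eventually_gt_atTop 0] with x hx0 using popaRatio_pos hφ hx0 hs
  have ha : 0 < η s := by
    obtain ⟨x, h1, h2⟩ := (hlt.and hpos).exists
    linarith
  have hv : Tendsto (fun x => η s * t / popaRatio φ x s) l (𝓝[≥] t) := by
    have hlim := (tendsto_const_nhds (x := η s * t)).div hb ha.ne'
    rw [mul_div_cancel_left₀ t ha.ne'] at hlim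
    refine tendsto_nhdsWithin_iff.2 ⟨hlim, ?_⟩
    filter_upwards [hlt, hpos] with x h1 h2
    rw [mem_Ici, le_div_iff₀ h2]
    nlinarith
  have hsplit : ∀ᶠ x in l, popaRatio φ x (s + η s * t)
      = popaRatio φ x s * popaRatio φ (x + s * φ x) (η s * t / popaRatio φ x s) := by
    filter_upwards [hx.eventually_gt_atTop 0, hpos] with x hx0 hE
    have h := popaRatio_add_mul (hφ x hx0).ne' (hφ _ (add_mul_apply_pos hφ hx0 hs)).ne'
      (η s * t / popaRatio φ x s)
    rwa [div_mul_cancel₀ _ hE.ne'] at h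
  have hu : 0 ≤ s + η s * t := add_nonneg hs (mul_nonneg ha.le ht)
  exact tendsto_nhds_unique (((hη.tendsto hu).mono_left inf_le_left).congr' hsplit)
    (hb.mul (hη.tendsto_popaRatio_comp hφ hC ht
      (tendsto_add_mul_apply_atTop hφ hx (.of_forall fun _ => hs)) hv))

end

/-- **Theorem O.** If `φ : (0,∞) → (0,∞)` satisfies `φ(x) = O(x)`
as `x → ∞` and `η_x(t) := φ(x + t·φ(x))/φ(x)` converges to `η(t)` as `x → ∞`,
locally uniformly in `t` on `[0, ∞)`, then `η` satisfies the Gołąb–Schinzel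
functional equation `η(s + η(s)·t) = η(s)·η(t)` for all `s, t ≥ 0`. -/
theorem theorem_O_golab_schinzel (φ η : ℝ → ℝ)
    (hφpos : ∀ x > (0 : ℝ), 0 < φ x)
    (hO : ∃ C X : ℝ, ∀ x ≥ X, φ x ≤ C * x)
    (hconv : ∀ K : Set ℝ, K ⊆ Set.Ici 0 → IsCompact K →
      TendstoUniformlyOn (fun x t => φ (x + t * φ x) / φ x) η atTop K) :
    ∀ s ≥ (0 : ℝ), ∀ t ≥ (0 : ℝ), η (s + η s * t) = η s * η t := by
  obtain ⟨C, X, hCX⟩ := hO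
  have hC : ∀ᶠ x in atTop, φ x ≤ C * x := eventually_atTop.2 ⟨X, hCX⟩
  have hη : HasPopaLimit φ η := hconv
  intro s hs t ht
  rcases frequently_or_distrib.1
    (.of_forall (f := atTop) fun x => le_or_gt (η s) (popaRatio φ x s)) with h | h
  · exact golab_schinzel_of_frequently_le hφpos hC hη hs ht h
  · exact golab_schinzel_of_frequently_lt hφpos hC hη hs ht h
end

section
/- Every function h : [0, ∞) → (0, ∞) satisfying the Gołąb–Schinzel functional equation h(s + h(s)·t) = h(s)·h(t) for all s, t ≥ 0 is continuous, and there exists ρ ≥ 0 such that h(t) = 1 + ρ·t for all t ≥ 0. -/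
/-!
A value `h t < 1` would make `t / (1 - h t)` a fixed point of `x ↦ t + h t * x`, which the
equation forbids; so `h ≥ 1`, and then `h` is nondecreasing. If `h s = 1` for some `s > 0`, then
`h (n * s) = 1` for all `n`, and monotonicity gives `h ≡ 1`. Otherwise `h` is injective, since
`h p = h q` with `p < q` gives `h ((q - p) / h p) = 1`; comparing
`h (1 + h 1 * t) = h 1 * h t = h (t + h t * 1)` then yields `h t = 1 + (h 1 - 1) * t`.
-/

def GolabSchinzelOn {K : Type*} [Field K] [LinearOrder K] (h : K → K) : Prop :=
  ∀ s ≥ (0 : K), ∀ t ≥ (0 : K), h (s + h s * t) = h s * h t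

namespace GolabSchinzelOn

variable {K : Type*} [Field K] [LinearOrder K] {h : K → K}

theorem map_zero (hGS : GolabSchinzelOn h) (h0 : h 0 ≠ 0) : h 0 = 1 := by
  have := hGS 0 le_rfl 0 le_rfl
  rwa [mul_zero, add_zero, eq_comm, mul_eq_left₀ h0] at this

variable [IsStrictOrderedRing K]

theorem one_le (hGS : GolabSchinzelOn h) (hne : ∀ t ≥ (0 : K), h t ≠ 0) {t : K} (ht : 0 ≤ t) :
    1 ≤ h t := by
  by_contra! hlt
  have hL : 0 ≤ t / (1 - h t) := div_nonneg ht (by linarith)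
  have hfix : t + h t * (t / (1 - h t)) = t / (1 - h t) := by
    field_simp [(by linarith : (1 - h t) ≠ 0)]
    ring
  have := hGS t ht _ hL
  rw [hfix, eq_comm, mul_eq_right₀ (hne _ hL)] at this
  exact hlt.ne this

theorem monotoneOn (hGS : GolabSchinzelOn h) (hne : ∀ t ≥ (0 : K), h t ≠ 0) :
    MonotoneOn h (Set.Ici 0) := by
  intro u hu v _ huv
  have hu1 := hGS.one_le hne hu
  have hx : 0 ≤ (v - u) / h u := div_nonneg (sub_nonneg.2 huv) (by linarith)
  have hux : u + h u * ((v - u) / h u) = v := by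
    field_simp [hne u hu]
    ring
  calc h u = h u * 1 := (mul_one _).symm
    _ ≤ h u * h ((v - u) / h u) := by gcongr; exact hGS.one_le hne hx
    _ = h v := by rw [← hGS u hu _ hx, hux]

theorem eq_one_of_eq_one [Archimedean K] (hGS : GolabSchinzelOn h)
    (hne : ∀ t ≥ (0 : K), h t ≠ 0) {s : K} (hs : 0 < s) (hs1 : h s = 1) {t : K} (ht : 0 ≤ t) :
    h t = 1 := by
  have hmul : ∀ n : ℕ, h (n * s) = 1 := by
    intro n
    induction n with
    | zero => simpa using hGS.map_zero (hne 0 le_rfl)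
    | succ n ih =>
      have := hGS s hs.le (n * s) (by positivity)
      rw [hs1, one_mul, one_mul, ih] at this
      rw [Nat.cast_succ, add_one_mul, add_comm, this]
  obtain ⟨n, hn⟩ := Archimedean.arch t hs
  rw [nsmul_eq_mul] at hn
  refine le_antisymm ?_ (hGS.one_le hne ht)
  calc h t ≤ h (n * s) := hGS.monotoneOn hne ht (by simp only [Set.mem_Ici]; positivity) hn
    _ = 1 := hmul n

theorem strictMonoOn [Archimedean K] (hGS : GolabSchinzelOn h) (hne : ∀ t ≥ (0 : K), h t ≠ 0)
    (hnt : ∃ a ≥ (0 : K), h a ≠ 1) : StrictMonoOn h (Set.Ici 0) := by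
  intro p hp q hq hpq
  refine (hGS.monotoneOn hne hp hq hpq.le).lt_of_ne fun hpq' => ?_
  obtain ⟨a, ha, ha1⟩ := hnt
  have hp1 := hGS.one_le hne hp
  have hs : 0 < (q - p) / h p := div_pos (sub_pos.2 hpq) (by linarith)
  have hpsq : p + h p * ((q - p) / h p) = q := by
    field_simp [hne p hp]
    ring
  have hs1 := hGS p hp _ hs.le
  rw [hpsq, ← hpq', eq_comm, mul_eq_left₀ (hne p hp)] at hs1
  exact ha1 (hGS.eq_one_of_eq_one hne hs hs1 ha)

theorem eq_one_add_mul [Archimedean K] (hGS : GolabSchinzelOn h) (hne : ∀ t ≥ (0 : K), h t ≠ 0)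
    {t : K} (ht : 0 ≤ t) : h t = 1 + (h 1 - 1) * t := by
  by_cases h1 : h 1 = 1
  · rw [h1, hGS.eq_one_of_eq_one hne one_pos h1 ht]
    ring
  have h11 := hGS.one_le hne zero_le_one
  have ht1 := hGS.one_le hne ht
  have hsymm : h (1 + h 1 * t) = h (t + h t * 1) := by
    rw [hGS 1 zero_le_one t ht, hGS t ht 1 zero_le_one, mul_comm]
  have := (hGS.strictMonoOn hne ⟨1, zero_le_one, h1⟩).injOn
    (show (0 : K) ≤ 1 + h 1 * t by positivity) (show (0 : K) ≤ t + h t * 1 by positivity) hsymm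
  linear_combination -this

end GolabSchinzelOn

/-- Every positive solution `h : [0,∞) → (0,∞)` of the
Gołąb–Schinzel equation `h(s + h(s)·t) = h(s)·h(t)` (for `s, t ≥ 0`) is
continuous on `[0,∞)` and of the form `h(t) = 1 + ρ·t` for some `ρ ≥ 0`. -/
theorem golab_schinzel_positive_solutions (h : ℝ → ℝ)
    (hpos : ∀ t ≥ (0 : ℝ), 0 < h t)
    (hGS : ∀ s ≥ (0 : ℝ), ∀ t ≥ (0 : ℝ), h (s + h s * t) = h s * h t) :
    ContinuousOn h (Set.Ici 0) ∧
    ∃ ρ ≥ (0 : ℝ), ∀ t ≥ (0 : ℝ), h t = 1 + ρ * t := by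
  have hGS : GolabSchinzelOn h := hGS
  have hne : ∀ t ≥ (0 : ℝ), h t ≠ 0 := fun t ht => (hpos t ht).ne'
  have hform : ∀ t ≥ (0 : ℝ), h t = 1 + (h 1 - 1) * t := fun t ht => hGS.eq_one_add_mul hne ht
  refine ⟨?_, h 1 - 1, sub_nonneg.2 (hGS.one_le hne zero_le_one), hform⟩
  exact (by fun_prop : Continuous fun t : ℝ => 1 + (h 1 - 1) * t).continuousOn.congr hform
end

section
/- Let ρ > 0, σ > 0 and κ ∈ ℝ, and define K_κ(t) := ((1 + ρ·t)^κ − 1)/σ for t ∈ G_ρ. Then K_κ maps G_ρ into G_σ and is additive from (G_ρ, ∘_ρ) to (G_σ, ∘_σ): K_κ(x ∘_ρ y) = K_κ(x) ∘_σ K_κ(y) for all x, y ∈ G_ρ. -/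
/-! `η_σ(t) = 1 + σ t` turns the Popa operation `∘_σ` into multiplication, and `1 + σ K_κ(t)` is
`(1 + ρ t)^κ`. Additivity of `K_κ` is therefore `((1 + ρ x)(1 + ρ y))^κ = (1 + ρ x)^κ (1 + ρ y)^κ`,
valid because both factors are positive on `G_ρ`; positivity of the power also gives `K_κ(G_ρ) ⊆ G_σ`. -/

/-- The Popa group law `x ∘_ρ y`. -/
def popaMul (ρ x y : ℝ) : ℝ := x + y + ρ * x * y

theorem one_add_mul_popaMul (ρ x y : ℝ) :
    1 + ρ * popaMul ρ x y = (1 + ρ * x) * (1 + ρ * y) := by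
  unfold popaMul; ring

theorem eq_popaMul_iff {σ : ℝ} (hσ : σ ≠ 0) (z x y : ℝ) :
    z = popaMul σ x y ↔ 1 + σ * z = (1 + σ * x) * (1 + σ * y) := by
  rw [← one_add_mul_popaMul, add_right_inj, mul_right_inj' hσ]

theorem one_add_mul_div_sub_one {σ : ℝ} (hσ : σ ≠ 0) (u : ℝ) : 1 + σ * ((u - 1) / σ) = u := by
  field_simp; ring

theorem popa_canonical_map_additive_general (ρ σ κ : ℝ) (hσ : 0 < σ)
    (K : ℝ → ℝ) (hK : ∀ t, K t = ((1 + ρ * t) ^ κ - 1) / σ) :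
    (∀ x : ℝ, 0 < 1 + ρ * x → 0 < 1 + σ * K x) ∧
    (∀ x y : ℝ, 0 < 1 + ρ * x → 0 < 1 + ρ * y →
      K (x + y + ρ * x * y) = K x + K y + σ * K x * K y) := by
  have hK' : ∀ t, 1 + σ * K t = (1 + ρ * t) ^ κ := fun t => by
    rw [hK, one_add_mul_div_sub_one hσ.ne']
  refine ⟨fun x hx => hK' x ▸ Real.rpow_pos_of_pos hx κ, fun x y hx hy => ?_⟩
  change K (popaMul ρ x y) = popaMul σ (K x) (K y)
  rw [eq_popaMul_iff hσ.ne', hK', hK', hK', one_add_mul_popaMul, Real.mul_rpow hx.le hy.le]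

/-- For `ρ, σ > 0` and `κ : ℝ`, the map
`K_κ(t) = ((1+ρ·t)^κ - 1)/σ` sends the Popa group `G_ρ` into `G_σ` and is
additive: `K_κ(x ∘_ρ y) = K_κ(x) ∘_σ K_κ(y)`, i.e.
`K_κ(x + y + ρ*x*y) = K_κ(x) + K_κ(y) + σ*K_κ(x)*K_κ(y)` for all `x, y ∈ G_ρ`. -/
theorem popa_canonical_map_additive (ρ σ κ : ℝ) (hρ : 0 < ρ) (hσ : 0 < σ)
    (K : ℝ → ℝ) (hK : ∀ t, K t = ((1 + ρ * t) ^ κ - 1) / σ) :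
    (∀ x : ℝ, 0 < 1 + ρ * x → 0 < 1 + σ * K x) ∧
    (∀ x y : ℝ, 0 < 1 + ρ * x → 0 < 1 + ρ * y →
      K (x + y + ρ * x * y) = K x + K y + σ * K x * K y) :=
  popa_canonical_map_additive_general ρ σ κ hσ K hK
end

section
/- Let ρ, σ ∈ (0, ∞) and let ψ : G_ρ → G_σ be additive, i.e. ψ(x ∘_ρ y) = ψ(x) ∘_σ ψ(y) for all x, y ∈ G_ρ. If ψ is bounded above on some nonempty open subinterval of G_ρ, then ψ is continuous and there exists κ ∈ ℝ such that ψ(t) = ((1 + ρ·t)^κ − 1)/σ for all t ∈ G_ρ. Likewise, if ρ ∈ (0, ∞) and ψ : G_ρ → ℝ satisfies ψ(x ∘_ρ y) = ψ(x) + ψ(y) and is bounded above on a nonempty open subinterval, then ψ(t) = κ·log(1 + ρ·t) for some κ ∈ ℝ. -/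
/-!
The maps `t ↦ log (1 + ρ t)` and `x ↦ log (1 + σ x)` are isomorphisms of `G_ρ` and `G_σ` onto
`(ℝ, +)`. Conjugating by them turns `ψ` (and `ψ₂`) into a solution of Cauchy's equation on `ℝ`
that is bounded above on an interval, and such a solution is linear: otherwise some `f c > 0`, and
a rational translate of `n c` inside the interval would have value `n f c`, unbounded in `n`.
A linear `κ u` pulled back gives `log (1 + σ ψ t) = κ log (1 + ρ t)`.
-/

open Real Set

namespace AddMonoidHom

variable {a b M : ℝ}

theorem eq_zero_of_bddAbove_Ioo (f : ℝ →+ ℝ) (h1 : f 1 = 0) (hab : a < b)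
    (hM : ∀ x ∈ Ioo a b, f x ≤ M) : f = 0 := by
  have hrat : ∀ q : ℚ, f q = 0 := fun q => by
    simpa [h1] using map_ratCast_smul f ℝ ℝ q 1
  have hnonpos : ∀ c, f c ≤ 0 := by
    intro c
    by_contra! hc
    obtain ⟨n, hn⟩ := exists_nat_gt (M / f c)
    obtain ⟨q, hqa, hqb⟩ := exists_rat_btwn (show a - n * c < b - n * c by linarith)
    have hval : f (q + n * c) = n * f c := by
      rw [map_add, hrat, zero_add, ← nsmul_eq_mul, map_nsmul, nsmul_eq_mul]
    have hle := hM (q + n * c) ⟨by linarith, by linarith⟩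
    rw [div_lt_iff₀ hc] at hn
    linarith
  ext c
  exact le_antisymm (hnonpos c) (by simpa using hnonpos (-c))

theorem apply_eq_mul_of_bddAbove_Ioo (f : ℝ →+ ℝ) (hab : a < b)
    (hM : ∀ x ∈ Ioo a b, f x ≤ M) (x : ℝ) : f x = f 1 * x := by
  set g := f - mulLeft (f 1)
  have hg_apply : ∀ x, g x = f x - f 1 * x := fun x => rfl
  have hg_bdd : ∀ x ∈ Ioo a b, g x ≤ M + max (-(f 1 * a)) (-(f 1 * b)) := by
    intro x hx
    have hlin : -(f 1 * x) ≤ max (-(f 1 * a)) (-(f 1 * b)) := by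
      rcases le_total 0 (f 1) with h | h
      · exact le_max_of_le_left (by nlinarith [hx.1])
      · exact le_max_of_le_right (by nlinarith [hx.2])
    rw [hg_apply]
    linarith [hM x hx]
  have hg_zero := g.eq_zero_of_bddAbove_Ioo (by simp [hg_apply]) hab hg_bdd
  have hgx := DFunLike.congr_fun hg_zero x
  rw [hg_apply, zero_apply] at hgx
  linarith

end AddMonoidHom

def popaOp (ρ x y : ℝ) : ℝ := x + y + ρ * x * y

/-- The inverse of the isomorphism `t ↦ log (1 + ρ t)` from `G_ρ` onto `(ℝ, +)`. -/
noncomputable def popaExp (ρ u : ℝ) : ℝ := (exp u - 1) / ρ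

section Popa

variable {ρ σ a b M : ℝ}

theorem one_add_mul_popaOp (ρ x y : ℝ) :
    1 + ρ * popaOp ρ x y = (1 + ρ * x) * (1 + ρ * y) := by
  unfold popaOp; ring

theorem log_one_add_mul_popaOp {x y : ℝ} (hx : 0 < 1 + σ * x) (hy : 0 < 1 + σ * y) :
    log (1 + σ * popaOp σ x y) = log (1 + σ * x) + log (1 + σ * y) := by
  rw [one_add_mul_popaOp, log_mul hx.ne' hy.ne']

theorem one_add_mul_popaExp (hρ : ρ ≠ 0) (u : ℝ) : 1 + ρ * popaExp ρ u = exp u := by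
  unfold popaExp; field_simp; ring

theorem popaExp_add (hρ : ρ ≠ 0) (u v : ℝ) :
    popaExp ρ (u + v) = popaOp ρ (popaExp ρ u) (popaExp ρ v) := by
  unfold popaExp popaOp; rw [exp_add]; field_simp; ring

theorem popaExp_log (hρ : ρ ≠ 0) {t : ℝ} (ht : 0 < 1 + ρ * t) :
    popaExp ρ (log (1 + ρ * t)) = t := by
  unfold popaExp; rw [exp_log ht]; field_simp; ring

theorem popaExp_strictMono (hρ : 0 < ρ) : StrictMono (popaExp ρ) := fun _ _ h =>
  div_lt_div_of_pos_right (sub_lt_sub_right (exp_lt_exp.mpr h) 1) hρ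

theorem popa_additive_eq_mul_log (hρ : 0 < ρ) (φ : ℝ → ℝ)
    (hadd : ∀ x y, 0 < 1 + ρ * x → 0 < 1 + ρ * y → φ (popaOp ρ x y) = φ x + φ y)
    (hab : a < b) (ha : 0 < 1 + ρ * a) (hM : ∀ x ∈ Ioo a b, φ x ≤ M) :
    ∃ κ : ℝ, ∀ t, 0 < 1 + ρ * t → φ t = κ * log (1 + ρ * t) := by
  have hdom : ∀ u, 0 < 1 + ρ * popaExp ρ u := fun u => by
    rw [one_add_mul_popaExp hρ.ne']; exact exp_pos u
  let f : ℝ →+ ℝ := AddMonoidHom.mk' (fun u => φ (popaExp ρ u)) fun u v => by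
    simp only [popaExp_add hρ.ne', hadd _ _ (hdom u) (hdom v)]
  have hb : 0 < 1 + ρ * b := by nlinarith
  have hf : ∀ u ∈ Ioo (log (1 + ρ * a)) (log (1 + ρ * b)), f u ≤ M := by
    rintro u ⟨hau, hub⟩
    apply hM
    rw [← popaExp_log hρ.ne' ha, ← popaExp_log hρ.ne' hb]
    exact ⟨popaExp_strictMono hρ hau, popaExp_strictMono hρ hub⟩
  refine ⟨f 1, fun t ht => ?_⟩
  have hlin := f.apply_eq_mul_of_bddAbove_Ioo (log_lt_log ha (by nlinarith)) hf (log (1 + ρ * t))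
  simpa [f, popaExp_log hρ.ne' ht] using hlin

theorem popa_hom_eq_rpow (hρ : 0 < ρ) (hσ : 0 < σ) (ψ : ℝ → ℝ)
    (hmap : ∀ x, 0 < 1 + ρ * x → 0 < 1 + σ * ψ x)
    (hadd : ∀ x y, 0 < 1 + ρ * x → 0 < 1 + ρ * y →
      ψ (popaOp ρ x y) = popaOp σ (ψ x) (ψ y))
    (hab : a < b) (ha : 0 < 1 + ρ * a) (hM : ∀ x ∈ Ioo a b, ψ x ≤ M) :
    ∃ κ : ℝ, ∀ t, 0 < 1 + ρ * t → ψ t = ((1 + ρ * t) ^ κ - 1) / σ := by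
  obtain ⟨κ, hκ⟩ := popa_additive_eq_mul_log (M := log (1 + σ * M)) hρ
    (fun x => log (1 + σ * ψ x))
    (fun x y hx hy => by
      simp only [hadd x y hx hy, log_one_add_mul_popaOp (hmap x hx) (hmap y hy)])
    hab ha
    (fun x hx => log_le_log (hmap x (by nlinarith [hx.1])) (by nlinarith [hM x hx]))
  refine ⟨κ, fun t ht => ?_⟩
  have h : 1 + σ * ψ t = (1 + ρ * t) ^ κ := by
    rw [rpow_def_of_pos ht, mul_comm (log _), ← hκ t ht, exp_log (hmap t ht)]
  field_simp
  linarith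

theorem continuousOn_popa_rpow (ρ σ κ : ℝ) :
    ContinuousOn (fun t => ((1 + ρ * t) ^ κ - 1) / σ) {x | 0 < 1 + ρ * x} :=
  ((ContinuousOn.rpow_const (by fun_prop) fun _ hx => Or.inl (ne_of_gt hx)).sub
    continuousOn_const).div_const σ

end Popa

/-- For `ρ, σ ∈ (0,∞)`: an additive map
`ψ : (G_ρ, ∘_ρ) → (G_σ, ∘_σ)` that is bounded above on some nonempty open
subinterval of `G_ρ` is continuous and of the canonical form
`ψ(t) = ((1+ρ·t)^κ - 1)/σ`; likewise an additive map `ψ₂ : (G_ρ, ∘_ρ) → (ℝ, +)`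
bounded above on a nonempty open subinterval is of the form
`ψ₂(t) = κ·log(1+ρ·t)`. -/
theorem popa_additive_bounded_above (ρ σ : ℝ) (hρ : 0 < ρ) (hσ : 0 < σ)
    (ψ ψ₂ : ℝ → ℝ)
    (hmap : ∀ x : ℝ, 0 < 1 + ρ * x → 0 < 1 + σ * ψ x)
    (hadd : ∀ x y : ℝ, 0 < 1 + ρ * x → 0 < 1 + ρ * y →
      ψ (x + y + ρ * x * y) = ψ x + ψ y + σ * ψ x * ψ y)
    (hbdd : ∃ a b M : ℝ, a < b ∧ 0 < 1 + ρ * a ∧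
      ∀ x ∈ Set.Ioo a b, ψ x ≤ M)
    (hadd₂ : ∀ x y : ℝ, 0 < 1 + ρ * x → 0 < 1 + ρ * y →
      ψ₂ (x + y + ρ * x * y) = ψ₂ x + ψ₂ y)
    (hbdd₂ : ∃ a b M : ℝ, a < b ∧ 0 < 1 + ρ * a ∧
      ∀ x ∈ Set.Ioo a b, ψ₂ x ≤ M) :
    (ContinuousOn ψ {x : ℝ | 0 < 1 + ρ * x} ∧
      ∃ κ : ℝ, ∀ t : ℝ, 0 < 1 + ρ * t → ψ t = ((1 + ρ * t) ^ κ - 1) / σ) ∧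
    (∃ κ : ℝ, ∀ t : ℝ, 0 < 1 + ρ * t → ψ₂ t = κ * Real.log (1 + ρ * t)) := by
  obtain ⟨a, b, M, hab, ha, hM⟩ := hbdd
  obtain ⟨a₂, b₂, M₂, hab₂, ha₂, hM₂⟩ := hbdd₂
  obtain ⟨κ, hκ⟩ := popa_hom_eq_rpow hρ hσ ψ hmap hadd hab ha hM
  exact ⟨⟨(continuousOn_popa_rpow ρ σ κ).congr hκ, κ, hκ⟩,
    popa_additive_eq_mul_log hρ ψ₂ hadd₂ hab₂ ha₂ hM₂⟩
end

section
/- Let ρ ≥ 0 and let A be a dense subgroup of the Popa group (G_ρ, ∘_ρ). Let g : A → ℝ with g(0) = 1 and K : A → ℝ, not identically 0, satisfy K(u ∘_ρ v) = g(v)·K(u) + K(v) for all u, v ∈ A. Then: (i) the set A_g := {u ∈ A : g(u) = 1} is a subgroup of (G_ρ, ∘_ρ), and K is additive on A_g, i.e. K(u ∘_ρ v) = K(u) + K(v) for u, v ∈ A_g; (ii) if A_g ≠ A, then there is a constant κ ≠ 0 such that K(t) = κ·(g(t) − 1) for all t ∈ A, and g is multiplicative: g(u ∘_ρ v) = g(u)·g(v)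 for all u, v ∈ A. -/
/-!
Associativity of `∘_ρ` expands `K(w ∘ u ∘ v)` in two ways, giving `g(u ∘ v) K(w) = g(u) g(v) K(w)`;
choosing `K(w) ≠ 0` makes `g` multiplicative, so `A_g` is a subgroup, on which the equation is
plain additivity. Commutativity of `∘_ρ` expands `K(t ∘ t₀) = K(t₀ ∘ t)` to
`(g(t₀) - 1) K(t) = (g(t) - 1) K(t₀)`; any `t₀` with `g(t₀) ≠ 1` then gives `κ = K(t₀)/(g(t₀) - 1)`.
-/

def popa (ρ x y : ℝ) : ℝ := x + y + ρ * x * y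

noncomputable def popaInv (ρ x : ℝ) : ℝ := -x / (1 + ρ * x)

instance (ρ : ℝ) : Std.Associative (popa ρ) := ⟨fun x y z => by unfold popa; ring⟩

instance (ρ : ℝ) : Std.Commutative (popa ρ) := ⟨fun x y => by unfold popa; ring⟩

theorem popa_popaInv {ρ x : ℝ} (hx : 1 + ρ * x ≠ 0) : popa ρ x (popaInv ρ x) = 0 :=
  calc popa ρ x (popaInv ρ x) = x - x * (1 + ρ * x) / (1 + ρ * x) := by
        unfold popa popaInv; ring
    _ = 0 := by rw [mul_div_cancel_right₀ x hx, sub_self]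

def IsGoldieOn {α 𝕜 : Type*} [Mul 𝕜] [Add 𝕜] (op : α → α → α) (A : Set α) (g K : α → 𝕜) :
    Prop :=
  ∀ u ∈ A, ∀ v ∈ A, K (op u v) = g v * K u + K v

namespace IsGoldieOn

variable {α 𝕜 : Type*} [Field 𝕜] {op : α → α → α} {A : Set α} {g K : α → 𝕜}

theorem map_op_eq_mul [Std.Associative op] (hG : IsGoldieOn op A g K)
    (hA : ∀ u ∈ A, ∀ v ∈ A, op u v ∈ A) {w : α} (hw : w ∈ A) (hKw : K w ≠ 0)
    {u v : α} (hu : u ∈ A) (hv : v ∈ A) : g (op u v) = g u * g v := by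
  have hwuv := hG w hw (op u v) (hA u hu v hv)
  have hwu_v := hG (op w u) (hA w hw u hu) v hv
  rw [Std.Associative.assoc (op := op)] at hwu_v
  refine mul_right_cancel₀ hKw ?_
  linear_combination hwuv.symm.trans hwu_v + g v * hG w hw u hu - hG u hu v hv

theorem add_of_eq_one (hG : IsGoldieOn op A g K) {u v : α} (hu : u ∈ A) (hv : v ∈ A)
    (hgv : g v = 1) : K (op u v) = K u + K v := by
  rw [hG u hu v hv, hgv, one_mul]

theorem sub_one_mul_comm [Std.Commutative op] (hG : IsGoldieOn op A g K) {s t : α}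
    (hs : s ∈ A) (ht : t ∈ A) : (g s - 1) * K t = (g t - 1) * K s := by
  have hst := hG s hs t ht
  rw [Std.Commutative.comm (op := op)] at hst
  linear_combination hst - hG t ht s hs

theorem exists_eq_mul_sub_one [Std.Commutative op] (hG : IsGoldieOn op A g K)
    {w : α} (hw : w ∈ A) (hKw : K w ≠ 0) {s : α} (hs : s ∈ A) (hgs : g s ≠ 1) :
    ∃ κ : 𝕜, κ ≠ 0 ∧ ∀ t ∈ A, K t = κ * (g t - 1) := by
  have hgs' : g s - 1 ≠ 0 := sub_ne_zero.mpr hgs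
  have hκ : ∀ t ∈ A, K t = K s / (g s - 1) * (g t - 1) := fun t ht => by
    field_simp
    linear_combination hG.sub_one_mul_comm hs ht
  refine ⟨K s / (g s - 1), fun h0 => hKw ?_, hκ⟩
  rw [hκ w hw, h0, zero_mul]

end IsGoldieOn

theorem goldie_equation_dichotomy_general (ρ : ℝ)
    (A : Set ℝ) (hAG : A ⊆ {x : ℝ | 0 < 1 + ρ * x})
    (hA0 : (0 : ℝ) ∈ A)
    (hAop : ∀ u ∈ A, ∀ v ∈ A, u + v + ρ * u * v ∈ A)
    (hAinv : ∀ u ∈ A, -u / (1 + ρ * u) ∈ A)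
    (g K : ℝ → ℝ) (hg0 : g 0 = 1)
    (hKne : ∃ u ∈ A, K u ≠ 0)
    (heq : ∀ u ∈ A, ∀ v ∈ A, K (u + v + ρ * u * v) = g v * K u + K v) :
    ((0 : ℝ) ∈ {u ∈ A | g u = 1} ∧
     (∀ u ∈ {u ∈ A | g u = 1}, ∀ v ∈ {u ∈ A | g u = 1},
        u + v + ρ * u * v ∈ {u ∈ A | g u = 1}) ∧
     (∀ u ∈ {u ∈ A | g u = 1}, -u / (1 + ρ * u) ∈ {u ∈ A | g u = 1}) ∧
     (∀ u ∈ {u ∈ A | g u = 1}, ∀ v ∈ {u ∈ A | g u = 1},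
        K (u + v + ρ * u * v) = K u + K v)) ∧
    ({u ∈ A | g u = 1} ≠ A →
      ∃ κ : ℝ, κ ≠ 0 ∧ (∀ t ∈ A, K t = κ * (g t - 1)) ∧
        ∀ u ∈ A, ∀ v ∈ A, g (u + v + ρ * u * v) = g u * g v) := by
  obtain ⟨w, hw, hKw⟩ := hKne
  have hG : IsGoldieOn (popa ρ) A g K := heq
  have hmul : ∀ u ∈ A, ∀ v ∈ A, g (popa ρ u v) = g u * g v := fun u hu v hv =>
    hG.map_op_eq_mul hAop hw hKw hu hv
  refine ⟨⟨⟨hA0, hg0⟩, ?_, ?_, ?_⟩, fun hne => ?_⟩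
  · rintro u ⟨hu, hgu⟩ v ⟨hv, hgv⟩
    exact ⟨hAop u hu v hv, by rw [← popa, hmul u hu v hv, hgu, hgv, one_mul]⟩
  · rintro u ⟨hu, hgu⟩
    have hinv := hmul u hu (popaInv ρ u) (hAinv u hu)
    rw [popa_popaInv (hAG hu).ne', hg0, hgu, one_mul] at hinv
    exact ⟨hAinv u hu, hinv.symm⟩
  · rintro u ⟨hu, -⟩ v ⟨hv, hgv⟩
    exact hG.add_of_eq_one hu hv hgv
  · obtain ⟨s, hs, hgs⟩ : ∃ s ∈ A, g s ≠ 1 := by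
      by_contra! h
      exact hne (Set.sep_eq_self_iff_mem_true.mpr h)
    obtain ⟨κ, hκ, hK⟩ := hG.exists_eq_mul_sub_one hw hKw hs hgs
    exact ⟨κ, hκ, hK, hmul⟩

/-- **Proposition 6.** Let `ρ ≥ 0`, let `A` be a dense subgroup
of the Popa group `(G_ρ, ∘_ρ)` (where `u ∘_ρ v = u + v + ρ*u*v`, identity `0`,
inverse `u ↦ -u/(1+ρ·u)`), let `g, K : A → ℝ` with `g(0) = 1`, `K` not
identically `0` on `A`, satisfy `K(u ∘_ρ v) = g(v)·K(u) + K(v)` on `A`. Then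
(i) `A_g := {u ∈ A | g(u) = 1}` is a subgroup on which `K` is additive, and
(ii) if `A_g ≠ A` there is `κ ≠ 0` with `K(t) = κ·(g(t) - 1)` on `A` and `g`
multiplicative on `A`. -/
theorem goldie_equation_dichotomy (ρ : ℝ) (hρ : 0 ≤ ρ)
    (A : Set ℝ) (hAG : A ⊆ {x : ℝ | 0 < 1 + ρ * x})
    (hA0 : (0 : ℝ) ∈ A)
    (hAop : ∀ u ∈ A, ∀ v ∈ A, u + v + ρ * u * v ∈ A)
    (hAinv : ∀ u ∈ A, -u / (1 + ρ * u) ∈ A)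
    (hAdense : ∀ x : ℝ, 0 < 1 + ρ * x → x ∈ closure A)
    (g K : ℝ → ℝ) (hg0 : g 0 = 1)
    (hKne : ∃ u ∈ A, K u ≠ 0)
    (heq : ∀ u ∈ A, ∀ v ∈ A, K (u + v + ρ * u * v) = g v * K u + K v) :
    ((0 : ℝ) ∈ {u ∈ A | g u = 1} ∧
     (∀ u ∈ {u ∈ A | g u = 1}, ∀ v ∈ {u ∈ A | g u = 1},
        u + v + ρ * u * v ∈ {u ∈ A | g u = 1}) ∧
     (∀ u ∈ {u ∈ A | g u = 1}, -u / (1 + ρ * u) ∈ {u ∈ A | g u = 1}) ∧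
     (∀ u ∈ {u ∈ A | g u = 1}, ∀ v ∈ {u ∈ A | g u = 1},
        K (u + v + ρ * u * v) = K u + K v)) ∧
    ({u ∈ A | g u = 1} ≠ A →
      ∃ κ : ℝ, κ ≠ 0 ∧ (∀ t ∈ A, K t = κ * (g t - 1)) ∧
        ∀ u ∈ A, ∀ v ∈ A, g (u + v + ρ * u * v) = g u * g v) :=
  goldie_equation_dichotomy_general ρ A hAG hA0 hAop hAinv g K hg0 hKne heq
end
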